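/- arXiv:1902.02555 — 3 statements merged into one kernel-verified Lean document; each statement's English description precedes it below -/
import Mathlib

section
/- For all positive integers k and m, the space of polynomials decomposes as the internal direct sum 𝒫 = ℋ ⊕ Σ_{1 ≤ i ≤ j ≤ k} r²_ij 𝒫: every polynomial P ∈ 𝒫 can be written uniquely as P = H + Σ_{1 ≤ i ≤ j ≤ k} r²_ij Q_ij with H a spherical harmonic and Q_ij ∈ 𝒫 (uniqueness meaning that the subspace ℋ and the subspace Σ_{i ≤ j} r²_ij 𝒫 intersect trivially) (Lemma 1(i)). -/
/-! The Fischer inner product `⟪P, Q⟫ = Σ_α α! · conj(P_α) · Q_α` makes multiplication by `x_s`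
adjoint to `∂/∂x_s`, hence multiplication by `r²_ij` adjoint to `Δ_ij`. If `H` is harmonic and
`H = Σ r²_ij Q_ij`, then `⟪H, H⟫ = Σ ⟪Q_ij, Δ_ij H⟫ = 0`. Conversely, project `P` orthogonally onto
the finite-dimensional space `K = Σ r²_ij 𝒫_{≤ deg P}`; the remainder `H` has degree at most
`deg P + 2`, so `r²_ij Δ_ij H ∈ K` and `⟪Δ_ij H, Δ_ij H⟫ = ⟪r²_ij Δ_ij H, H⟫ = 0`. -/

open MvPolynomial

/-- The mixed Laplacian `Δ_ij = Σ_s ∂_{x^i_s} ∂_{x^j_s}` on polynomials in `k` vector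
variables of `ℝ^m`. -/
noncomputable def mixedLap (k m : ℕ) (i j : Fin k)
    (P : MvPolynomial (Fin k × Fin m) ℂ) : MvPolynomial (Fin k × Fin m) ℂ :=
  ∑ s : Fin m, pderiv (i, s) (pderiv (j, s) P)

/-- The polynomial `r²_ij = Σ_s x^i_s x^j_s`. -/
noncomputable def r2 (k m : ℕ) (i j : Fin k) : MvPolynomial (Fin k × Fin m) ℂ :=
  ∑ s : Fin m, X (i, s) * X (j, s)

/-- `H` is a spherical harmonic if `Δ_ij H = 0` for all `i ≤ j`. -/
def IsSphericalHarmonic (k m : ℕ) (H : MvPolynomial (Fin k × Fin m) ℂ) : Prop :=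
  ∀ i j : Fin k, i ≤ j → mixedLap k m i j H = 0

namespace MvPolynomial

open Finset ComplexConjugate

variable {σ : Type*}

def multiFactorial (α : σ →₀ ℕ) : ℕ :=
  α.prod fun _ n => n.factorial

lemma multiFactorial_pos (α : σ →₀ ℕ) : 0 < multiFactorial α :=
  prod_pos fun _ _ => Nat.factorial_pos _

lemma multiFactorial_single_add (s : σ) (α : σ →₀ ℕ) :
    multiFactorial (Finsupp.single s 1 + α) = (α s + 1) * multiFactorial α := by
  classical
  have hfac : ∀ β : σ →₀ ℕ, multiFactorial β = (β s).factorial * multiFactorial (β.erase s) :=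
    fun β => (Finsupp.mul_prod_erase' β s _ fun _ => Nat.factorial_zero).symm
  rw [hfac, hfac α, Finsupp.erase_add, Finsupp.erase_single, zero_add]
  simp [add_comm 1, Nat.factorial_succ, mul_assoc]

noncomputable def fischerInner (P Q : MvPolynomial σ ℂ) : ℂ :=
  ∑ α ∈ P.support, (multiFactorial α : ℂ) * conj (P.coeff α) * Q.coeff α

lemma fischerInner_eq_sum_of_subset {P : MvPolynomial σ ℂ} {S : Finset (σ →₀ ℕ)}
    (h : P.support ⊆ S) (Q : MvPolynomial σ ℂ) :
    fischerInner P Q = ∑ α ∈ S, (multiFactorial α : ℂ) * conj (P.coeff α) * Q.coeff α :=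
  sum_subset h fun α _ hα => by simp [notMem_support_iff.mp hα]

lemma fischerInner_add_left (P P' Q : MvPolynomial σ ℂ) :
    fischerInner (P + P') Q = fischerInner P Q + fischerInner P' Q := by
  classical
  rw [fischerInner_eq_sum_of_subset support_add, fischerInner_eq_sum_of_subset subset_union_left,
    fischerInner_eq_sum_of_subset subset_union_right, ← sum_add_distrib]
  simp only [coeff_add, map_add]
  exact sum_congr rfl fun _ _ => by ring

lemma fischerInner_zero_right (P : MvPolynomial σ ℂ) : fischerInner P 0 = 0 := by
  simp [fischerInner]

lemma fischerInner_sum_left {ι : Type*} (s : Finset ι) (P : ι → MvPolynomial σ ℂ)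
    (Q : MvPolynomial σ ℂ) : fischerInner (∑ i ∈ s, P i) Q = ∑ i ∈ s, fischerInner (P i) Q :=
  map_sum (AddMonoidHom.mk' (fischerInner · Q) (fischerInner_add_left · · Q)) P s

lemma fischerInner_sum_right {ι : Type*} (s : Finset ι) (P : MvPolynomial σ ℂ)
    (Q : ι → MvPolynomial σ ℂ) : fischerInner P (∑ i ∈ s, Q i) = ∑ i ∈ s, fischerInner P (Q i) := by
  simp only [fischerInner, coeff_sum, mul_sum]
  exact sum_comm

lemma fischerInner_smul_left (c : ℂ) (P Q : MvPolynomial σ ℂ) :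
    fischerInner (c • P) Q = conj c * fischerInner P Q := by
  rw [fischerInner_eq_sum_of_subset support_smul, fischerInner, mul_sum]
  simp only [coeff_smul, smul_eq_mul, map_mul]
  exact sum_congr rfl fun _ _ => by ring

lemma conj_fischerInner (P Q : MvPolynomial σ ℂ) : conj (fischerInner Q P) = fischerInner P Q := by
  classical
  rw [fischerInner_eq_sum_of_subset subset_union_right,
    fischerInner_eq_sum_of_subset (subset_union_left (s₂ := Q.support)), map_sum]
  simp only [map_mul, map_natCast, Complex.conj_conj]
  exact sum_congr rfl fun _ _ => by ring

lemma fischerInner_self (P : MvPolynomial σ ℂ) :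
    fischerInner P P =
      ((∑ α ∈ P.support, (multiFactorial α : ℝ) * Complex.normSq (P.coeff α) : ℝ) : ℂ) := by
  push_cast
  exact sum_congr rfl fun α _ => by rw [Complex.normSq_eq_conj_mul_self, mul_assoc]

lemma fischerInner_self_re_nonneg (P : MvPolynomial σ ℂ) : 0 ≤ (fischerInner P P).re := by
  rw [fischerInner_self, Complex.ofReal_re]
  exact sum_nonneg fun _ _ => mul_nonneg (Nat.cast_nonneg _) (Complex.normSq_nonneg _)

lemma eq_zero_of_fischerInner_self_eq_zero {P : MvPolynomial σ ℂ} (h : fischerInner P P = 0) :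
    P = 0 := by
  rw [fischerInner_self, Complex.ofReal_eq_zero, sum_eq_zero_iff_of_nonneg
    fun _ _ => mul_nonneg (Nat.cast_nonneg _) (Complex.normSq_nonneg _)] at h
  refine support_eq_empty.mp (eq_empty_of_forall_notMem fun α hα => ?_)
  have hweight : (0 : ℝ) < multiFactorial α := Nat.cast_pos.mpr (multiFactorial_pos α)
  exact mem_support_iff.mp hα
    (Complex.normSq_eq_zero.mp ((mul_eq_zero.mp (h α hα)).resolve_left hweight.ne'))

lemma fischerInner_X_mul (s : σ) (P Q : MvPolynomial σ ℂ) :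
    fischerInner (X s * P) Q = fischerInner P (pderiv s Q) := by
  rw [fischerInner, support_X_mul, sum_map]
  refine sum_congr rfl fun α _ => ?_
  simp only [addLeftEmbedding_apply, coeff_X_mul, coeff_pderiv, multiFactorial_single_add,
    add_comm α]
  push_cast
  ring

lemma totalDegree_pderiv_le (s : σ) (P : MvPolynomial σ ℂ) :
    (pderiv s P).totalDegree ≤ P.totalDegree - 1 := by
  refine Finset.sup_le fun α hα => ?_
  rw [mem_support_iff, coeff_pderiv] at hα
  have hdeg := le_totalDegree (mem_support_iff.mpr (left_ne_zero_of_mul hα))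
  rw [Finsupp.sum_add_index' (fun _ => rfl) fun _ _ _ => rfl, Finsupp.sum_single_index rfl] at hdeg
  omega

open InnerProductSpace in
lemma exists_eq_add_fischerInner_eq_zero (K : Submodule ℂ (MvPolynomial σ ℂ))
    [FiniteDimensional ℂ K] (P : MvPolynomial σ ℂ) :
    ∃ w ∈ K, ∃ h, P = w + h ∧ ∀ v ∈ K, fischerInner v h = 0 := by
  let core : Core ℂ (MvPolynomial σ ℂ) :=
    { inner := fischerInner
      conj_inner_symm := conj_fischerInner
      re_inner_nonneg := fischerInner_self_re_nonneg
      add_left := fischerInner_add_left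
      smul_left := fun P Q c => fischerInner_smul_left c P Q
      definite := fun _ => eq_zero_of_fischerInner_self_eq_zero }
  let : NormedAddCommGroup (MvPolynomial σ ℂ) := core.toNormedAddCommGroup
  let : InnerProductSpace ℂ (MvPolynomial σ ℂ) := ofCore core.toCore
  obtain ⟨w, hw, h, hh, rfl⟩ := K.exists_add_mem_mem_orthogonal P
  exact ⟨w, hw, h, rfl, (K.mem_orthogonal h).mp hh⟩

section FischerDecomposition

variable {ι : Type*} [Fintype ι] (r : ι → MvPolynomial σ ℂ)
  (D : ι → MvPolynomial σ ℂ → MvPolynomial σ ℂ)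

lemma eq_zero_of_eq_sum_mul_of_adjoint
    (hadj : ∀ i P Q, fischerInner (r i * P) Q = fischerInner P (D i Q))
    {H : MvPolynomial σ ℂ} (hH : ∀ i, D i H = 0) {Q : ι → MvPolynomial σ ℂ}
    (hHQ : H = ∑ i, r i * Q i) : H = 0 := by
  refine eq_zero_of_fischerInner_self_eq_zero ?_
  nth_rw 1 [hHQ]
  simp only [fischerInner_sum_left, hadj, hH, fischerInner_zero_right, sum_const_zero]

theorem exists_eq_add_sum_mul_of_adjoint [Finite σ] (d : ℕ) (hr : ∀ i, (r i).totalDegree ≤ d)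
    (hD : ∀ i P, (D i P).totalDegree ≤ P.totalDegree - d)
    (hadj : ∀ i P Q, fischerInner (r i * P) Q = fischerInner P (D i Q)) (P : MvPolynomial σ ℂ) :
    ∃ (H : MvPolynomial σ ℂ) (Q : ι → MvPolynomial σ ℂ),
      (∀ i, D i H = 0) ∧ P = H + ∑ i, r i * Q i := by
  classical
  let V := restrictTotalDegree σ ℂ P.totalDegree
  let T : (ι → V) →ₗ[ℂ] MvPolynomial σ ℂ :=
    ∑ i, LinearMap.mulLeft ℂ (r i) ∘ₗ V.subtype ∘ₗ LinearMap.proj i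
  have hT : ∀ Q, T Q = ∑ i, r i * Q i := fun Q => by simp [T]
  obtain ⟨_, ⟨Q, rfl⟩, H, hP, hH⟩ := exists_eq_add_fischerInner_eq_zero (LinearMap.range T) P
  refine ⟨H, fun i => Q i, fun i => ?_, by rw [hP, hT, add_comm]⟩
  have hTQ : (T Q).totalDegree ≤ P.totalDegree + d := by
    rw [hT]
    refine (totalDegree_finsetSum _ _).trans (Finset.sup_le fun i _ => ?_)
    have hQ := (mem_restrictTotalDegree _ _ _).mp (Q i).2
    exact (totalDegree_mul _ _).trans (by linarith [hr i])
  have hDH : (D i H).totalDegree ≤ P.totalDegree := by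
    have hH' : H.totalDegree ≤ P.totalDegree + d :=
      (eq_sub_of_add_eq' hP.symm ▸ totalDegree_sub _ _).trans (max_le (by omega) hTQ)
    exact (hD i H).trans (by omega)
  refine eq_zero_of_fischerInner_self_eq_zero ?_
  rw [← hadj]
  refine hH _ ⟨Pi.single i ⟨D i H, (mem_restrictTotalDegree _ _ _).mpr hDH⟩, ?_⟩
  rw [hT, Finset.sum_eq_single i (fun j _ hj => by simp [hj]) (by simp), Pi.single_eq_same]

end FischerDecomposition

end MvPolynomial

section SphericalHarmonics

variable {k m : ℕ}

lemma totalDegree_r2_le (i j : Fin k) : (r2 k m i j).totalDegree ≤ 2 :=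
  (totalDegree_finsetSum _ _).trans <| Finset.sup_le fun s _ =>
    (totalDegree_mul _ _).trans (by simp [totalDegree_X])

lemma totalDegree_mixedLap_le (i j : Fin k) (P : MvPolynomial (Fin k × Fin m) ℂ) :
    (mixedLap k m i j P).totalDegree ≤ P.totalDegree - 2 :=
  (totalDegree_finsetSum _ _).trans <| Finset.sup_le fun s _ =>
    ((totalDegree_pderiv_le _ _).trans (Nat.sub_le_sub_right (totalDegree_pderiv_le _ _) 1)).trans
      (by omega)

lemma fischerInner_r2_mul (i j : Fin k) (P Q : MvPolynomial (Fin k × Fin m) ℂ) :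
    fischerInner (r2 k m i j * P) Q = fischerInner P (mixedLap k m i j Q) := by
  rw [r2, Finset.sum_mul, fischerInner_sum_left, mixedLap, fischerInner_sum_right]
  refine Finset.sum_congr rfl fun s _ => ?_
  rw [mul_comm (X _), mul_assoc, fischerInner_X_mul, fischerInner_X_mul]

end SphericalHarmonics

theorem fischer_step_general (k m : ℕ) :
    (∀ P : MvPolynomial (Fin k × Fin m) ℂ,
      ∃ (H : MvPolynomial (Fin k × Fin m) ℂ)
        (Q : {p : Fin k × Fin k // p.1 ≤ p.2} → MvPolynomial (Fin k × Fin m) ℂ),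
        IsSphericalHarmonic k m H ∧
          P = H + ∑ p : {p : Fin k × Fin k // p.1 ≤ p.2}, r2 k m p.1.1 p.1.2 * Q p) ∧
    (∀ H : MvPolynomial (Fin k × Fin m) ℂ, IsSphericalHarmonic k m H →
      (∃ Q : {p : Fin k × Fin k // p.1 ≤ p.2} → MvPolynomial (Fin k × Fin m) ℂ,
        H = ∑ p : {p : Fin k × Fin k // p.1 ≤ p.2}, r2 k m p.1.1 p.1.2 * Q p) →
      H = 0) := by
  have hadj (p : {p : Fin k × Fin k // p.1 ≤ p.2}) := fischerInner_r2_mul (m := m) p.1.1 p.1.2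
  refine ⟨fun P => ?_, fun H hH ⟨Q, hHQ⟩ => ?_⟩
  · obtain ⟨H, Q, hH, hP⟩ := exists_eq_add_sum_mul_of_adjoint _ _ 2
      (fun _ => totalDegree_r2_le _ _) (fun _ => totalDegree_mixedLap_le _ _) hadj P
    exact ⟨H, Q, fun i j hij => hH ⟨(i, j), hij⟩, hP⟩
  · exact eq_zero_of_eq_sum_mul_of_adjoint _ _ hadj (fun p => hH _ _ p.2) hHQ

/-- Lemma 1(i): `𝒫 = ℋ ⊕ Σ_{1 ≤ i ≤ j ≤ k} r²_ij 𝒫`. Every polynomial `P` can be written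
as `P = H + Σ_{i ≤ j} r²_ij Q_ij` with `H` a spherical harmonic, and the subspaces `ℋ`
and `Σ_{i ≤ j} r²_ij 𝒫` intersect trivially. -/
theorem fischer_step (k m : ℕ) (hk : 0 < k) (hm : 0 < m) :
    (∀ P : MvPolynomial (Fin k × Fin m) ℂ,
      ∃ (H : MvPolynomial (Fin k × Fin m) ℂ)
        (Q : {p : Fin k × Fin k // p.1 ≤ p.2} → MvPolynomial (Fin k × Fin m) ℂ),
        IsSphericalHarmonic k m H ∧
          P = H + ∑ p : {p : Fin k × Fin k // p.1 ≤ p.2}, r2 k m p.1.1 p.1.2 * Q p) ∧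
    (∀ H : MvPolynomial (Fin k × Fin m) ℂ, IsSphericalHarmonic k m H →
      (∃ Q : {p : Fin k × Fin k // p.1 ≤ p.2} → MvPolynomial (Fin k × Fin m) ℂ,
        H = ∑ p : {p : Fin k × Fin k // p.1 ≤ p.2}, r2 k m p.1.1 p.1.2 * Q p) →
      H = 0) :=
  fischer_step_general k m
end

section
/- For all positive integers k and m, a nonzero spherical harmonic cannot lie in the subspace Σ_{1 ≤ i ≤ j ≤ k} r²_ij 𝒫; that is, ℋ ∩ (Σ_{1 ≤ i ≤ j ≤ k} r²_ij 𝒫) = {0} (directness part of Lemma 1(i)). -/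
open MvPolynomial

/-!
The Fischer inner product `⟨P, Q⟩ = Σ_α α! · conj(P_α) · Q_α` is positive definite, and under it
multiplication by `x^i_s` is adjoint to `∂_{x^i_s}`; hence multiplication by `r²_ij` is adjoint
to `Δ_ij`. If `H = Σ r²_ij Q_ij` is harmonic, then `⟨H, H⟩ = Σ ⟨Δ_ij H, Q_ij⟩ = 0`, so `H = 0`.
-/

open ComplexConjugate

namespace Finsupp

variable {σ : Type*}

def factorial (α : σ →₀ ℕ) : ℕ := α.prod fun _ n => n.factorial

theorem factorial_pos (α : σ →₀ ℕ) : 0 < α.factorial :=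
  Finset.prod_pos fun _ _ => Nat.factorial_pos _

theorem factorial_eq_mul_factorial_erase [DecidableEq σ] (α : σ →₀ ℕ) (s : σ) :
    α.factorial = (α s).factorial * (α.erase s).factorial :=
  (mul_prod_erase' α s _ fun _ => Nat.factorial_zero).symm

theorem factorial_eq_mul_factorial_sub_single [DecidableEq σ] {α : σ →₀ ℕ} {s : σ}
    (hs : α s ≠ 0) : α.factorial = α s * (α - single s 1).factorial := by
  have herase : (α - single s 1).erase s = α.erase s := by
    ext t
    rcases eq_or_ne t s with rfl | ht
    · simp
    · simp [ht]
  rw [factorial_eq_mul_factorial_erase α s, factorial_eq_mul_factorial_erase (α - single s 1) s,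
    herase, ← mul_assoc, tsub_apply, single_eq_same, Nat.mul_factorial_pred hs]

end Finsupp

namespace MvPolynomial

variable {σ : Type*}

noncomputable def fischerPairing (P Q : MvPolynomial σ ℂ) : ℂ :=
  ∑ α ∈ P.support, (α.factorial : ℂ) * conj (coeff α P) * coeff α Q

theorem fischerPairing_eq_sum_of_subset {P : MvPolynomial σ ℂ} {t : Finset (σ →₀ ℕ)}
    (h : P.support ⊆ t) (Q : MvPolynomial σ ℂ) :
    fischerPairing P Q = ∑ α ∈ t, (α.factorial : ℂ) * conj (coeff α P) * coeff α Q :=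
  Finset.sum_subset h fun α _ hα => by simp [notMem_support_iff.mp hα]

noncomputable def fischer : MvPolynomial σ ℂ →ₗ⋆[ℂ] MvPolynomial σ ℂ →ₗ[ℂ] ℂ :=
  LinearMap.mk₂'ₛₗ (starRingEnd ℂ) (RingHom.id ℂ) fischerPairing
    (fun P P' Q => by
      classical
      rw [fischerPairing_eq_sum_of_subset support_add,
        fischerPairing_eq_sum_of_subset Finset.subset_union_left,
        fischerPairing_eq_sum_of_subset Finset.subset_union_right, ← Finset.sum_add_distrib]
      refine Finset.sum_congr rfl fun α _ => ?_
      rw [coeff_add, map_add]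
      ring)
    (fun c P Q => by
      rw [fischerPairing_eq_sum_of_subset support_smul, smul_eq_mul, fischerPairing,
        Finset.mul_sum]
      refine Finset.sum_congr rfl fun α _ => ?_
      rw [coeff_smul, smul_eq_mul, map_mul]
      ring)
    (fun P Q Q' => by simp only [fischerPairing, coeff_add, mul_add, Finset.sum_add_distrib])
    (fun c P Q => by
      rw [RingHom.id_apply, smul_eq_mul, fischerPairing, fischerPairing, Finset.mul_sum]
      refine Finset.sum_congr rfl fun α _ => ?_
      rw [coeff_smul, smul_eq_mul]
      ring)

theorem fischer_apply (P Q : MvPolynomial σ ℂ) :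
    fischer P Q = ∑ α ∈ P.support, (α.factorial : ℂ) * conj (coeff α P) * coeff α Q := rfl

theorem fischer_monomial_left (u : σ →₀ ℕ) (a : ℂ) (Q : MvPolynomial σ ℂ) :
    fischer (monomial u a) Q = u.factorial * conj a * coeff u Q := by
  classical
  refine (fischerPairing_eq_sum_of_subset support_monomial_subset Q).trans ?_
  rw [Finset.sum_singleton, coeff_monomial, if_pos rfl]

theorem fischer_self (P : MvPolynomial σ ℂ) :
    fischer P P = ((∑ α ∈ P.support, α.factorial * Complex.normSq (coeff α P) : ℝ) : ℂ) := by
  rw [fischer_apply]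
  push_cast
  refine Finset.sum_congr rfl fun α _ => ?_
  rw [mul_assoc, Complex.normSq_eq_conj_mul_self]

theorem eq_zero_of_fischer_self_eq_zero {P : MvPolynomial σ ℂ} (h : fischer P P = 0) :
    P = 0 := by
  have hnonneg (α : σ →₀ ℕ) : 0 ≤ (α.factorial : ℝ) * Complex.normSq (coeff α P) :=
    mul_nonneg (Nat.cast_nonneg _) (Complex.normSq_nonneg _)
  rw [fischer_self, Complex.ofReal_eq_zero,
    Finset.sum_eq_zero_iff_of_nonneg fun α _ => hnonneg α] at h
  rw [← support_eq_empty, Finset.eq_empty_iff_forall_notMem]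
  intro α hα
  have hcoeff : coeff α P ≠ 0 := mem_support_iff.mp hα
  have hfac : (α.factorial : ℝ) ≠ 0 := by exact_mod_cast α.factorial_pos.ne'
  exact mul_ne_zero hfac (Complex.normSq_pos.mpr hcoeff).ne' (h α hα)

theorem fischer_X_mul [DecidableEq σ] (P Q : MvPolynomial σ ℂ) (s : σ) :
    fischer P (X s * Q) = fischer (pderiv s P) Q := by
  induction P using MvPolynomial.induction_on' with
  | add P P' hP hP' =>
    rw [map_add, LinearMap.add_apply, hP, hP', map_add, map_add, LinearMap.add_apply]
  | monomial u a =>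
    rw [fischer_monomial_left, pderiv_monomial, fischer_monomial_left, coeff_X_mul']
    by_cases hs : u s = 0
    · rw [if_neg (by simpa using hs), hs]
      simp
    · rw [if_pos (Finsupp.mem_support_iff.mpr hs),
        Finsupp.factorial_eq_mul_factorial_sub_single hs, map_mul, Complex.conj_natCast]
      push_cast
      ring

end MvPolynomial

theorem fischer_r2_mul {k m : ℕ} (i j : Fin k) (P Q : MvPolynomial (Fin k × Fin m) ℂ) :
    fischer P (r2 k m i j * Q) = fischer (mixedLap k m i j P) Q := by
  classical
  have hr2 : r2 k m i j * Q = ∑ s, X (j, s) * (X (i, s) * Q) := by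
    rw [r2, Finset.sum_mul]
    exact Finset.sum_congr rfl fun _ _ => by ring
  rw [hr2, map_sum, mixedLap, map_sum, LinearMap.sum_apply]
  simp only [fischer_X_mul]

theorem harmonic_inter_trivial_general (k m : ℕ)
    (H : MvPolynomial (Fin k × Fin m) ℂ) (hH : IsSphericalHarmonic k m H)
    (Q : {p : Fin k × Fin k // p.1 ≤ p.2} → MvPolynomial (Fin k × Fin m) ℂ)
    (hQ : H = ∑ p : {p : Fin k × Fin k // p.1 ≤ p.2}, r2 k m p.1.1 p.1.2 * Q p) :
    H = 0 := by
  refine eq_zero_of_fischer_self_eq_zero ?_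
  calc fischer H H = fischer H (∑ p, r2 k m p.1.1 p.1.2 * Q p) := by rw [← hQ]
    _ = ∑ p, fischer (mixedLap k m p.1.1 p.1.2 H) (Q p) := by
      simp only [map_sum, fischer_r2_mul]
    _ = 0 := Finset.sum_eq_zero fun p _ => by
      rw [hH _ _ p.2, map_zero, LinearMap.zero_apply]

/-- Directness part of Lemma 1(i): a spherical harmonic lying in the subspace
`Σ_{1 ≤ i ≤ j ≤ k} r²_ij 𝒫` must be zero. -/
theorem harmonic_inter_trivial (k m : ℕ) (hk : 0 < k) (hm : 0 < m)
    (H : MvPolynomial (Fin k × Fin m) ℂ) (hH : IsSphericalHarmonic k m H)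
    (Q : {p : Fin k × Fin k // p.1 ≤ p.2} → MvPolynomial (Fin k × Fin m) ℂ)
    (hQ : H = ∑ p : {p : Fin k × Fin k // p.1 ≤ p.2}, r2 k m p.1.1 p.1.2 * Q p) :
    H = 0 :=
  harmonic_inter_trivial_general k m H hH Q hQ
end

section
/- The space ℋ of spherical harmonics is invariant under all mixed Euler operators: if H ∈ 𝒫 satisfies Δ_st H = 0 for all 1 ≤ s ≤ t ≤ k, then for every 1 ≤ i, j ≤ k the polynomial E_ij H, where E_ij = Σ_{s=1}^m x^i_s ∂_{x^j_s}, also satisfies Δ_st (E_ij H) = 0 for all 1 ≤ s ≤ t ≤ k (so ℋ is a module for the Lie algebra gl(k) generated by the mixed Euler operators). -/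
open MvPolynomial

/-- The mixed Euler operator `E_ij = Σ_s x^i_s ∂_{x^j_s}`. -/
noncomputable def mixedEuler (k m : ℕ) (i j : Fin k) (P : MvPolynomial (Fin k × Fin m) ℂ) :
    MvPolynomial (Fin k × Fin m) ℂ :=
  ∑ s : Fin m, X (i, s) * pderiv (j, s) P

/-!
The mixed Laplacians and Euler operators satisfy the `gl(k)` commutation relation
`Δ_st E_ij = E_ij Δ_st + δ_is Δ_tj + δ_it Δ_sj`, which comes from
`[∂_a ∂_b, x_c] = δ_ac ∂_b + δ_bc ∂_a` and the commutation of partial derivatives.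
Every term on the right kills a spherical harmonic, since `Δ_st = Δ_ts`.
-/

namespace MvPolynomial

variable {R σ : Type*}

theorem pderiv_pderiv_comm [CommRing R] (i j : σ) (f : MvPolynomial σ R) :
    pderiv i (pderiv j f) = pderiv j (pderiv i f) := by
  classical
  -- the commutator is a derivation vanishing on the variables
  have hbracket :
      ⁅pderiv i, pderiv j⁆ = (0 : Derivation R (MvPolynomial σ R) (MvPolynomial σ R)) :=
    derivation_ext fun k => by
      rw [Derivation.commutator_apply]; simp [pderiv_X, Pi.single_apply, apply_ite]
  rw [← sub_eq_zero, ← Derivation.commutator_apply, hbracket, Derivation.zero_apply]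

theorem pderiv_pderiv_X_mul [CommSemiring R] [DecidableEq σ] (a b c : σ) (f : MvPolynomial σ R) :
    pderiv a (pderiv b (X c * f)) =
      (if c = a then pderiv b f else 0) + (if c = b then pderiv a f else 0) +
        X c * pderiv a (pderiv b f) := by
  simp only [pderiv_mul, pderiv_X, Pi.single_apply, map_add]
  split_ifs <;> simp only [pderiv_one, map_zero, add_zero] <;> ring

end MvPolynomial

section

variable {k m : ℕ}

theorem mixedLap_comm (s t : Fin k) (P : MvPolynomial (Fin k × Fin m) ℂ) :
    mixedLap k m s t P = mixedLap k m t s P := by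
  simp only [mixedLap, pderiv_pderiv_comm (s, _)]

theorem mixedLap_pderiv (s t : Fin k) (a : Fin k × Fin m) (P : MvPolynomial (Fin k × Fin m) ℂ) :
    mixedLap k m s t (pderiv a P) = pderiv a (mixedLap k m s t P) := by
  simp only [mixedLap, map_sum, pderiv_pderiv_comm _ a]

theorem mixedLap_sum {ι : Type*} (s t : Fin k) (S : Finset ι)
    (f : ι → MvPolynomial (Fin k × Fin m) ℂ) :
    mixedLap k m s t (∑ v ∈ S, f v) = ∑ v ∈ S, mixedLap k m s t (f v) := by
  simp only [mixedLap, map_sum]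
  exact Finset.sum_comm

theorem mixedLap_X_mul (s t i : Fin k) (v : Fin m) (P : MvPolynomial (Fin k × Fin m) ℂ) :
    mixedLap k m s t (X (i, v) * P) =
      (if i = s then pderiv (t, v) P else 0) + (if i = t then pderiv (s, v) P else 0) +
        X (i, v) * mixedLap k m s t P := by
  simp only [mixedLap, pderiv_pderiv_X_mul, Finset.sum_add_distrib, Finset.mul_sum, Prod.ext_iff]
  simp [ite_and]

theorem mixedLap_mixedEuler (s t i j : Fin k) (P : MvPolynomial (Fin k × Fin m) ℂ) :
    mixedLap k m s t (mixedEuler k m i j P) =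
      (if i = s then mixedLap k m t j P else 0) + (if i = t then mixedLap k m s j P else 0) +
        mixedEuler k m i j (mixedLap k m s t P) := by
  simp only [mixedEuler, mixedLap_sum, mixedLap_X_mul, mixedLap_pderiv, Finset.sum_add_distrib]
  congr 2 <;> split_ifs <;> simp [mixedLap]

theorem IsSphericalHarmonic.mixedLap_eq_zero {H : MvPolynomial (Fin k × Fin m) ℂ}
    (hH : IsSphericalHarmonic k m H) (s t : Fin k) : mixedLap k m s t H = 0 := by
  rcases le_total s t with hst | hts
  · exact hH s t hst
  · rw [mixedLap_comm]
    exact hH t s hts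

end

theorem sphericalHarmonic_mixedEuler_invariant_general (k m : ℕ)
    (H : MvPolynomial (Fin k × Fin m) ℂ) (hH : IsSphericalHarmonic k m H) (i j : Fin k) :
    IsSphericalHarmonic k m (mixedEuler k m i j H) := by
  intro s t _
  rw [mixedLap_mixedEuler]
  simp [hH.mixedLap_eq_zero, mixedEuler]

/-- The space `ℋ` of spherical harmonics is invariant under all mixed Euler operators:
if `H` is a spherical harmonic, then so is `E_ij H` for every `i, j`. -/
theorem sphericalHarmonic_mixedEuler_invariant (k m : ℕ) (hk : 0 < k) (hm : 0 < m)
    (H : MvPolynomial (Fin k × Fin m) ℂ) (hH : IsSphericalHarmonic k m H) (i j : Fin k) :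
    IsSphericalHarmonic k m (mixedEuler k m i j H) :=
  sphericalHarmonic_mixedEuler_invariant_general k m H hH i j
end
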